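/- arXiv:1510.05824 — 2 statements merged into one kernel-verified Lean document; each statement's English description precedes it below -/
import Mathlib

section
/- For all n ≥ q ≥ 2, the q-stability of the complete graph K_n equals ⌊n/q⌋: the maximum over all f : (Fin q)^n → (Fin q)^n such that each f_v does not depend on x_v, of min_x |{v : f_v(x) = x_v}|, equals ⌊n/q⌋. -/
/-- `fv` depends essentially on coordinate `u`. -/
def dependsOn {n : ℕ} {A : Type} (fv : (Fin n → A) → A) (u : Fin n) : Prop :=
  ∃ x y : Fin n → A, (∀ w, w ≠ u → x w = y w) ∧ fv x ≠ fv y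

/-- `f` belongs to `F(D,q)`: its interaction graph is a subgraph of `D`. -/
def inF {n : ℕ} {A : Type} (D : Fin n → Fin n → Prop) (f : (Fin n → A) → (Fin n → A)) : Prop :=
  ∀ u v, dependsOn (fun x => f x v) u → D u v

/-- `I` is a feedback vertex set of `D`: removing `I` leaves no directed cycle. -/
def isFVS {n : ℕ} (D : Fin n → Fin n → Prop) (I : Finset (Fin n)) : Prop :=
  ∀ v, ¬ Relation.TransGen (fun a b => D a b ∧ a ∉ I ∧ b ∉ I) v v

/-- minimum size of a feedback vertex set. -/
noncomputable def tau {n : ℕ} (D : Fin n → Fin n → Prop) : ℕ :=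
  sInf {k | ∃ I : Finset (Fin n), isFVS D I ∧ I.card = k}

/-- the q-instability of D. -/
noncomputable def instab {n : ℕ} (D : Fin n → Fin n → Prop) (q : ℕ) : ℕ :=
  sSup {m | ∃ f : (Fin n → Fin q) → (Fin n → Fin q), inF D f ∧
    ∀ x, m ≤ hammingDist x (f x)}

/-- the q-stability of D. -/
noncomputable def stab {n : ℕ} (D : Fin n → Fin n → Prop) (q : ℕ) : ℕ :=
  sSup {m | ∃ f : (Fin n → Fin q) → (Fin n → Fin q), inF D f ∧
    ∀ x, m ≤ (Finset.univ.filter (fun v => f x v = x v)).card}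

/-- `S` is the vertex set of a directed cycle of `D`. -/
def isCycleSet {n : ℕ} (D : Fin n → Fin n → Prop) (S : Finset (Fin n)) : Prop :=
  ∃ m : ℕ, 1 ≤ m ∧ ∃ c : ZMod m → Fin n, Function.Injective c ∧
    Set.range c = ↑S ∧ ∀ i, D (c i) (c (i + 1))

/-- maximum number of pairwise vertex-disjoint cycles. -/
noncomputable def nu {n : ℕ} (D : Fin n → Fin n → Prop) : ℕ :=
  sSup {k | ∃ L : Fin k → Finset (Fin n), (∀ i, isCycleSet D (L i)) ∧
    ∀ i j, i ≠ j → Disjoint (L i) (L j)}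

/-- `S` is the vertex set of a chordless directed cycle of `D`. -/
def isChordlessCycle {n : ℕ} (D : Fin n → Fin n → Prop) (S : Finset (Fin n)) : Prop :=
  ∃ m : ℕ, 1 ≤ m ∧ ∃ c : ZMod m → Fin n, Function.Injective c ∧
    Set.range c = ↑S ∧ (∀ i, D (c i) (c (i + 1))) ∧
    ∀ i j, D (c i) (c j) → j = i + 1

/-- chromatic number of the intersection graph of chordless cycles. -/
noncomputable def chromCycles {n : ℕ} (D : Fin n → Fin n → Prop) : ℕ :=
  sInf {k | ∃ col : {S : Finset (Fin n) // isChordlessCycle D S} → Fin k,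
    ∀ S T, S.1 ≠ T.1 → (S.1 ∩ T.1).Nonempty → col S ≠ col T}

/-- Counting lemma: if `f · v` doesn't depend on coordinate `v`, exactly `q^(n-1)`
inputs agree with `f` at `v`. -/
lemma count_agree {n q : ℕ} [NeZero q] (v : Fin n)
    (f : (Fin n → Fin q) → Fin n → Fin q)
    (hf : ∀ x y : Fin n → Fin q, (∀ u, u ≠ v → x u = y u) → f x v = f y v) :
    (Finset.univ.filter (fun x : Fin n → Fin q => f x v = x v)).card = q ^ (n - 1) := by
  classical
  have hb : ∀ g : {u : Fin n // u ≠ v} → Fin q, True := fun _ => trivial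
  let b : ({u : Fin n // u ≠ v} → Fin q) → (Fin n → Fin q) :=
    fun g w => if h : w = v then 0 else g ⟨w, h⟩
  have hfix : ∀ g, f (Function.update (b g) v (f (b g) v)) v
      = f (b g) v := by
    intro g
    exact hf _ _ (fun u hu => Function.update_of_ne hu _ _)
  let e : {x : Fin n → Fin q // f x v = x v} ≃ ({u : Fin n // u ≠ v} → Fin q) :=
    { toFun := fun x u => x.1 u.1
      invFun := fun g => ⟨Function.update (b g) v (f (b g) v), by
        rw [hfix g]; simp⟩
      left_inv := by
        rintro ⟨x, hx⟩
        apply Subtype.ext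
        funext w
        by_cases h : w = v
        · subst h
          simp only [Function.update_self]
          rw [← hx]
          apply hf
          intro u hu
          simp [b, hu]
        · simp [Function.update_of_ne h, b, h]
      right_inv := by
        intro g
        funext u
        simp [Function.update_of_ne u.2, b, u.2] }
  have h1 : (Finset.univ.filter (fun x : Fin n → Fin q => f x v = x v)).card
      = Fintype.card {x : Fin n → Fin q // f x v = x v} :=
    (Fintype.card_subtype _).symm
  rw [h1, Fintype.card_congr e]
  have h2 : Fintype.card {u : Fin n // u ≠ v} = n - 1 := by
    have := Fintype.card_subtype_compl (fun u : Fin n => u = v)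
    simpa [Fintype.card_subtype_eq] using this
  simp [h2]

lemma lower_bound {n q : ℕ} (hq : 2 ≤ q) (hn : q ≤ n) :
    ∃ f : (Fin n → Fin q) → (Fin n → Fin q),
      (∀ v (x y : Fin n → Fin q), (∀ u, u ≠ v → x u = y u) → f x v = f y v) ∧
      ∀ x, n / q ≤ (Finset.univ.filter (fun v => f x v = x v)).card := by

  haveI : NeZero q := ⟨by omega⟩
  have hq0 : 0 < q := by omega
  have hn0 : 0 < n := by omega
  set k := n / q with hk
  have hkq : k * q ≤ n := Nat.div_mul_le_self n q
  have hcv : ∀ b : ℕ, b < k → ∀ j : Fin q, b * q + (j : ℕ) < n := by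
    intro b hb j
    calc b * q + (j : ℕ) < b * q + q := by have := j.isLt; omega
      _ = (b + 1) * q := by ring
      _ ≤ k * q := Nat.mul_le_mul_right _ hb
      _ ≤ n := hkq
  set c : ℕ → Fin q → Fin n := fun b j => ⟨(b * q + (j : ℕ)) % n, Nat.mod_lt _ hn0⟩ with hcdef
  have hc : ∀ b, b < k → ∀ j : Fin q, ((c b j : Fin n) : ℕ) = b * q + (j : ℕ) := by
    intro b hb j
    exact Nat.mod_eq_of_lt (hcv b hb j)
  set r : Fin n → Fin q := fun v => ⟨(v : ℕ) % q, Nat.mod_lt _ hq0⟩ with hrdef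
  set f : (Fin n → Fin q) → (Fin n → Fin q) := fun x v =>
    if (v : ℕ) < k * q then
      r v - ∑ j ∈ Finset.univ.erase (r v), x (c ((v : ℕ) / q) j)
    else 0 with hfdef
  refine ⟨f, ?_, ?_⟩
  · -- independence
    intro v x y hxy
    by_cases h : (v : ℕ) < k * q
    · have hdv : (v : ℕ) / q < k := (Nat.div_lt_iff_lt_mul hq0).2 h
      simp only [hfdef, h, if_true]
      congr 1
      apply Finset.sum_congr rfl
      intro j hj
      apply hxy
      intro hcontra
      have h1 : ((c ((v : ℕ) / q) j : Fin n) : ℕ) = ((v : ℕ) / q) * q + (j : ℕ) :=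
        hc _ hdv j
      rw [hcontra] at h1
      have h2 : q * ((v : ℕ) / q) + (v : ℕ) % q = (v : ℕ) := Nat.div_add_mod _ _
      have h3 : ((v : ℕ) / q) * q = q * ((v : ℕ) / q) := Nat.mul_comm _ _
      have hj' : (j : ℕ) = (v : ℕ) % q := by omega
      have : j = r v := by
        apply Fin.ext
        simpa [hrdef] using hj'
      exact (Finset.mem_erase.1 hj).1 this
    · simp only [hfdef, h, if_false]
  · -- count
    intro x
    set S : ℕ → Fin q := fun b => ∑ j : Fin q, x (c b j) with hSdef
    set g : ℕ → Fin n := fun b => c b (S b) with hgdef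
    have hval : ∀ b, b < k → ((g b : Fin n) : ℕ) = b * q + ((S b : Fin q) : ℕ) :=
      fun b hb => hc b hb (S b)
    have hdm : ∀ b, b < k → ((g b : Fin n) : ℕ) / q = b ∧ ((g b : Fin n) : ℕ) % q = ((S b : Fin q) : ℕ) := by
      intro b hb
      rw [Nat.div_mod_unique hq0]
      refine ⟨?_, (S b).isLt⟩
      rw [hval b hb]; ring
    have hdiv : ∀ b, b < k → ((g b : Fin n) : ℕ) / q = b := fun b hb => (hdm b hb).1
    have hmod : ∀ b, b < k → ((g b : Fin n) : ℕ) % q = ((S b : Fin q) : ℕ) := fun b hb => (hdm b hb).2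
    have hagree : ∀ b, b < k → f x (g b) = x (g b) := by
      intro b hb
      have hlt : ((g b : Fin n) : ℕ) < k * q := by
        rw [hval b hb]
        calc b * q + ((S b : Fin q) : ℕ) < b * q + q := by have := (S b).isLt; omega
          _ = (b + 1) * q := by ring
          _ ≤ k * q := Nat.mul_le_mul_right _ hb
      have hr : r (g b) = S b := by
        apply Fin.ext
        simp only [hrdef]
        exact hmod b hb
      simp only [hfdef, hlt, if_true, hr, hdiv b hb]
      have hsum := Finset.add_sum_erase Finset.univ (fun j => x (c b j)) (Finset.mem_univ (S b))
      rw [sub_eq_iff_eq_add]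
      exact hsum.symm
    have hinj : Set.InjOn g ↑(Finset.range k) := by
      intro a ha b hb hab
      have ha' : a < k := Finset.mem_range.1 (by exact_mod_cast ha)
      have hb' : b < k := Finset.mem_range.1 (by exact_mod_cast hb)
      rw [← hdiv a ha', ← hdiv b hb', hab]
    have hsub : (Finset.range k).image g ⊆ Finset.univ.filter (fun v => f x v = x v) := by
      intro v hv
      obtain ⟨b, hb, rfl⟩ := Finset.mem_image.1 hv
      exact Finset.mem_filter.2 ⟨Finset.mem_univ _, hagree b (Finset.mem_range.1 hb)⟩
    calc n / q = ((Finset.range k).image g).card := by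
          rw [Finset.card_image_of_injOn hinj, Finset.card_range]
      _ ≤ _ := Finset.card_le_card hsub

lemma upper_bound {n q : ℕ} (hq : 2 ≤ q) (hn : q ≤ n)
    (f : (Fin n → Fin q) → (Fin n → Fin q))
    (hf : ∀ v (x y : Fin n → Fin q), (∀ u, u ≠ v → x u = y u) → f x v = f y v) :
    ∃ x, (Finset.univ.filter (fun v => f x v = x v)).card ≤ n / q := by
  haveI : NeZero q := ⟨by omega⟩
  have hq0 : 0 < q := by omega
  have hn0 : 0 < n := by omega
  by_contra hcon
  push_neg at hcon
  have hsum : ∑ x : Fin n → Fin q, (Finset.univ.filter (fun v => f x v = x v)).card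
      = n * q ^ (n - 1) := by
    have h1 : ∀ x : Fin n → Fin q, (Finset.univ.filter (fun v => f x v = x v)).card
        = ∑ v : Fin n, if f x v = x v then 1 else 0 := by
      intro x; rw [Finset.card_filter]
    calc ∑ x : Fin n → Fin q, (Finset.univ.filter (fun v => f x v = x v)).card
        = ∑ x : Fin n → Fin q, ∑ v : Fin n, if f x v = x v then 1 else 0 :=
          Finset.sum_congr rfl (fun x _ => h1 x)
      _ = ∑ v : Fin n, ∑ x : Fin n → Fin q, if f x v = x v then 1 else 0 :=
          Finset.sum_comm
      _ = ∑ v : Fin n, (Finset.univ.filter (fun x : Fin n → Fin q => f x v = x v)).card :=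
          Finset.sum_congr rfl (fun v _ => (Finset.card_filter _ _).symm)
      _ = ∑ _v : Fin n, q ^ (n - 1) :=
          Finset.sum_congr rfl (fun v _ => count_agree v f (hf v))
      _ = n * q ^ (n - 1) := by rw [Finset.sum_const, Finset.card_univ, Fintype.card_fin, smul_eq_mul]
  have hlb : q ^ n * (n / q + 1) ≤ n * q ^ (n - 1) := by
    have hcard : Fintype.card (Fin n → Fin q) = q ^ n := by
      simp [Fintype.card_fun]
    calc q ^ n * (n / q + 1)
        = ∑ _x : Fin n → Fin q, (n / q + 1) := by
          rw [Finset.sum_const, Finset.card_univ, hcard, smul_eq_mul]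
      _ ≤ ∑ x : Fin n → Fin q, (Finset.univ.filter (fun v => f x v = x v)).card :=
          Finset.sum_le_sum (fun x _ => hcon x)
      _ = n * q ^ (n - 1) := hsum
  clear hsum hcon
  have h1 : n + 1 ≤ q * (n / q + 1) := by
    have e : q * (n / q + 1) = q * (n / q) + q := by ring
    have h2 : q * (n / q) + n % q = n := Nat.div_add_mod n q
    have h3 : n % q < q := Nat.mod_lt n hq0
    omega
  have hpow : q ^ n = q ^ (n - 1) * q := by
    rw [← pow_succ]
    congr 1
    omega
  have h4 : q ^ (n - 1) * (n + 1) ≤ q ^ (n - 1) * (q * (n / q + 1)) :=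
    Nat.mul_le_mul_left _ h1
  have h5 : q ^ (n - 1) * (q * (n / q + 1)) = q ^ n * (n / q + 1) := by
    rw [hpow]; ring
  have h6 : q ^ (n - 1) * (n + 1) ≤ q ^ (n - 1) * n := by
    calc q ^ (n - 1) * (n + 1) ≤ q ^ n * (n / q + 1) := by rw [← h5]; exact h4
      _ ≤ n * q ^ (n - 1) := hlb
      _ = q ^ (n - 1) * n := Nat.mul_comm _ _
  have hp : 0 < q ^ (n - 1) := Nat.pow_pos hq0
  have := Nat.le_of_mul_le_mul_left h6 hp
  omega

/-- s(K_n, q) = ⌊n/q⌋ for n ≥ q ≥ 2. -/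
theorem stmt7 (n q : ℕ) (hq : 2 ≤ q) (hn : q ≤ n) :
    (∃ f : (Fin n → Fin q) → (Fin n → Fin q),
      (∀ v (x y : Fin n → Fin q), (∀ u, u ≠ v → x u = y u) → f x v = f y v) ∧
      ∀ x, n / q ≤ (Finset.univ.filter (fun v => f x v = x v)).card) ∧
    (∀ f : (Fin n → Fin q) → (Fin n → Fin q),
      (∀ v (x y : Fin n → Fin q), (∀ u, u ≠ v → x u = y u) → f x v = f y v) →
      ∃ x, (Finset.univ.filter (fun v => f x v = x v)).card ≤ n / q) := by
  exact ⟨lower_bound hq hn, fun f hf => upper_bound hq hn f hf⟩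
end

section
/- Let D be a loopless digraph on n vertices, I a feedback vertex set of D with complement J, q ≥ 2, and f ∈ F(D,q). For every x ∈ (Fin q)^I and every a ∈ (Fin q)^J, there exists z ∈ (Fin q)^n with z_I = x and (f(z) − z)_J = a (the difference taken coordinatewise in ℤ/qℤ). -/
open Classical in
lemma agree_aux {n : ℕ} {A : Type} (fv : (Fin n → A) → A) :
    ∀ (k : ℕ) (x y : Fin n → A), (Finset.univ.filter fun u => x u ≠ y u).card ≤ k →
    (∀ u, x u ≠ y u → ¬ dependsOn fv u) → fv x = fv y := by
  intro k
  induction k with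
  | zero =>
    intro x y hc _
    have hxy : x = y := by
      funext u
      by_contra hu
      have hmem : u ∈ Finset.univ.filter fun u => x u ≠ y u := by simp [hu]
      have := Finset.card_pos.mpr ⟨u, hmem⟩
      omega
    rw [hxy]
  | succ k ih =>
    intro x y hc hdep
    by_cases hxy : ∀ u, x u = y u
    · exact congrArg fv (funext hxy)
    push_neg at hxy
    obtain ⟨u, hu⟩ := hxy
    have h1 : fv x = fv (Function.update x u (y u)) := by
      by_contra hne
      exact hdep u hu ⟨x, Function.update x u (y u),
        fun w hw => (Function.update_of_ne hw _ _).symm, hne⟩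
    rw [h1]
    apply ih
    · have hsub : (Finset.univ.filter fun w => Function.update x u (y u) w ≠ y w) ⊆
          (Finset.univ.filter fun w => x w ≠ y w).erase u := by
        intro w hw
        simp only [Finset.mem_filter, Finset.mem_erase, Finset.mem_univ, true_and] at *
        rcases eq_or_ne w u with rfl | hwu
        · simp [Function.update_self] at hw
        · rw [Function.update_of_ne hwu] at hw; exact ⟨hwu, hw⟩
      have h2 := Finset.card_le_card hsub
      have hmem : u ∈ Finset.univ.filter fun w => x w ≠ y w := by simp [hu]
      have h3 := Finset.card_erase_of_mem hmem
      omega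
    · intro w hw
      rcases eq_or_ne w u with rfl | hwu
      · simp [Function.update_self] at hw
      · rw [Function.update_of_ne hwu] at hw; exact hdep w hw

lemma eq_of_agree_on_deps {n : ℕ} {A : Type} (fv : (Fin n → A) → A)
    (x y : Fin n → A) (h : ∀ u, x u ≠ y u → ¬ dependsOn fv u) : fv x = fv y :=
  agree_aux fv _ x y le_rfl h

/-- given a feedback vertex set I, for every prescription x on I and every
prescribed displacement a outside I, some z agrees with x on I and has displacement a on J. -/
theorem stmt16 (n q : ℕ) (hq : 2 ≤ q) (D : Fin n → Fin n → Prop)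
    (hD : ∀ v, ¬ D v v) (I : Finset (Fin n)) (hI : isFVS D I)
    (f : (Fin n → ZMod q) → (Fin n → ZMod q)) (hf : inF D f) :
    ∀ (x : {v : Fin n // v ∈ I} → ZMod q) (a : {v : Fin n // v ∉ I} → ZMod q),
      ∃ z : Fin n → ZMod q,
        (∀ v (h : v ∈ I), z v = x ⟨v, h⟩) ∧
        (∀ v (h : v ∉ I), f z v - z v = a ⟨v, h⟩) := by
  classical
  intro x a
  set R : Fin n → Fin n → Prop := fun u v => D u v ∧ u ∉ I ∧ v ∉ I with hRdef
  have hwf : WellFounded R := by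
    haveI : IsTrans (Fin n) (Relation.TransGen R) :=
      ⟨fun _ _ _ h1 h2 => Relation.TransGen.trans h1 h2⟩
    haveI : IsIrrefl (Fin n) (Relation.TransGen R) := ⟨hI⟩
    exact Subrelation.wf (fun h => Relation.TransGen.single h)
      (Finite.wellFounded_of_trans_of_irrefl _)
  let G : ∀ v : Fin n, (∀ u, R u v → ZMod q) → ZMod q := fun v rec =>
    if h : v ∈ I then x ⟨v, h⟩
    else f (fun u => if hu : u ∈ I then x ⟨u, hu⟩
      else if hr : R u v then rec u hr else (0 : ZMod q)) v - a ⟨v, h⟩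
  let z := hwf.fix G
  have hz : ∀ v, z v = G v (fun u _ => z u) := fun v => hwf.fix_eq G v
  have hzI : ∀ v (h : v ∈ I), z v = x ⟨v, h⟩ := by
    intro v h
    rw [hz v]
    exact dif_pos h
  refine ⟨z, hzI, fun v hv => ?_⟩
  have hfw : f (fun u => if hu : u ∈ I then x ⟨u, hu⟩
      else if hr : R u v then z u else (0 : ZMod q)) v = f z v := by
    apply eq_of_agree_on_deps (fun w => f w v)
    intro u hu hdep
    apply hu
    have hDuv : D u v := hf u v hdep
    by_cases huI : u ∈ I
    · rw [dif_pos huI, hzI u huI]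
    · rw [dif_neg huI, dif_pos ⟨hDuv, huI, hv⟩]
  have hzv : z v = f z v - a ⟨v, hv⟩ := by
    rw [hz v]
    show (if h : v ∈ I then x ⟨v, h⟩ else _) = _
    rw [dif_neg hv, hfw]
  rw [hzv]
  ring
end
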